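/- arXiv:math/0010239 — 4 statements merged into one kernel-verified Lean document; each statement's English description precedes it below -/
import Mathlib

section
/- In the Coxeter system of type G_2, every distinguished subexpression σ for 1 of the reduced word (1,2,1,2,1,2) satisfies |J(σ)| ≤ 2, where J(σ) = {j : σ_j ≠ σ_{j-1} and ℓ(σ_j) > ℓ(σ_{j-1})}. (This is the combinatorial content of the statement that every Deodhar stratum D_σ(h) of the intersection of opposed big cells in the G_2 flag variety has codimension at most 2.) -/
/-!
Along a subexpression each step either stays put or multiplies by a simple reflection, which
changes the length by exactly one. Since `σ` starts and ends at `1`, the lengths telescope, so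
there are as many up-steps as down-steps. Three up-steps would therefore force all six steps to
move, giving `1 = (s₁ s₂)³`, which fails in the dihedral group of order 12.
-/

/-- The word `(1,2,1,2,1,2)` of type `G₂`, encoded with indices `0, 1 : Fin 2`. -/
def g2Word : Fin 6 → Fin 2 := ![0, 1, 0, 1, 0, 1]

/-- `σ = (σ 0, …, σ 6)` is a distinguished subexpression for `1` of the word `(1,2,1,2,1,2)`:
`σ 0 = σ 6 = 1`, each `σ (j+1) ∈ {σ j, σ j * s (i (j+1))}`, and whenever right multiplication
by `s (i (j+1))` decreases the length of `σ j`, we have `σ (j+1) = σ j * s (i (j+1))`. -/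
def IsDistSubexprOne {W : Type*} [Group W] (cs : CoxeterSystem CoxeterMatrix.G₂ W)
    (σ : Fin 7 → W) : Prop :=
  σ 0 = 1 ∧ σ 6 = 1 ∧
  (∀ j : Fin 6, σ j.succ = σ j.castSucc ∨
      σ j.succ = σ j.castSucc * cs.simple (g2Word j)) ∧
  (∀ j : Fin 6, cs.length (σ j.castSucc * cs.simple (g2Word j)) < cs.length (σ j.castSucc) →
      σ j.succ = σ j.castSucc * cs.simple (g2Word j))

open Finset

theorem Fin.sum_univ_succ_sub_castSucc {G : Type*} [AddCommGroup G] {n : ℕ}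
    (f : Fin (n + 1) → G) : ∑ i : Fin n, (f i.succ - f i.castSucc) = f (Fin.last n) - f 0 := by
  induction n with
  | zero => simp
  | succ n ih =>
    rw [Fin.sum_univ_castSucc]
    simp only [Fin.succ_castSucc]
    rw [ih (fun i => f i.castSucc), Fin.succ_last, Fin.castSucc_zero]
    abel

namespace CoxeterSystem

variable {B W : Type*} [Group W] {M : CoxeterMatrix B} (cs : CoxeterSystem M W) {n : ℕ}

theorem last_eq_mul_wordProd_ofFn {ω : Fin n → B} {σ : Fin (n + 1) → W}
    (hσ : ∀ j, σ j.succ = σ j.castSucc * cs.simple (ω j)) :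
    σ (Fin.last n) = σ 0 * cs.wordProd (List.ofFn ω) := by
  have hpartial := congrFun (Fin.partialProd_left_inv σ) (Fin.last n)
  simp only [hσ, inv_mul_cancel_left, Pi.smul_apply, smul_eq_mul] at hpartial
  rw [← hpartial, Fin.partialProd, Fin.val_last, List.take_of_length_le (by simp), wordProd,
    List.map_ofFn]
  rfl

def IsSubexpr (ω : Fin n → B) (σ : Fin (n + 1) → W) : Prop :=
  ∀ j, σ j.succ = σ j.castSucc ∨ σ j.succ = σ j.castSucc * cs.simple (ω j)

open scoped Classical in
noncomputable def upSteps (σ : Fin (n + 1) → W) : Finset (Fin n) :=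
  univ.filter fun j => σ j.succ ≠ σ j.castSucc ∧ cs.length (σ j.castSucc) < cs.length (σ j.succ)

open scoped Classical in
noncomputable def downSteps (σ : Fin (n + 1) → W) : Finset (Fin n) :=
  univ.filter fun j => σ j.succ ≠ σ j.castSucc ∧ cs.length (σ j.succ) < cs.length (σ j.castSucc)

variable {cs} in
@[simp]
theorem mem_upSteps {σ : Fin (n + 1) → W} {j : Fin n} :
    j ∈ cs.upSteps σ ↔
      σ j.succ ≠ σ j.castSucc ∧ cs.length (σ j.castSucc) < cs.length (σ j.succ) := by
  simp [upSteps]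

variable {cs} in
@[simp]
theorem mem_downSteps {σ : Fin (n + 1) → W} {j : Fin n} :
    j ∈ cs.downSteps σ ↔
      σ j.succ ≠ σ j.castSucc ∧ cs.length (σ j.succ) < cs.length (σ j.castSucc) := by
  simp [downSteps]

theorem disjoint_upSteps_downSteps (σ : Fin (n + 1) → W) :
    Disjoint (cs.upSteps σ) (cs.downSteps σ) := by
  simp only [upSteps, downSteps, disjoint_filter]
  exact fun _ _ hup hdown => lt_asymm hup.2 hdown.2

namespace IsSubexpr

variable {cs} {ω : Fin n → B} {σ : Fin (n + 1) → W}

theorem length_succ_sub_length_castSucc (hσ : cs.IsSubexpr ω σ) (j : Fin n) :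
    (cs.length (σ j.succ) : ℤ) - cs.length (σ j.castSucc) =
      (if j ∈ cs.upSteps σ then 1 else 0) - (if j ∈ cs.downSteps σ then 1 else 0) := by
  rcases hσ j with hstay | hmove
  · rw [if_neg (by simp [hstay]), if_neg (by simp [hstay]), hstay, sub_self, sub_self]
  have hne : σ j.succ ≠ σ j.castSucc := fun h =>
    cs.length_mul_simple_ne (σ j.castSucc) (ω j) (by rw [← hmove, h])
  rcases cs.length_mul_simple (σ j.castSucc) (ω j) with hup | hdown
  · rw [← hmove] at hup
    rw [if_pos (mem_upSteps.mpr ⟨hne, by omega⟩), if_neg fun h => by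
      have := (mem_downSteps.mp h).2; omega]
    omega
  · rw [← hmove] at hdown
    rw [if_neg fun h => by have := (mem_upSteps.mp h).2; omega,
      if_pos (mem_downSteps.mpr ⟨hne, by omega⟩)]
    omega

theorem card_upSteps_sub_card_downSteps (hσ : cs.IsSubexpr ω σ) :
    ((cs.upSteps σ).card : ℤ) - (cs.downSteps σ).card =
      cs.length (σ (Fin.last n)) - cs.length (σ 0) := by
  rw [← Fin.sum_univ_succ_sub_castSucc (fun j => (cs.length (σ j) : ℤ)),
    sum_congr rfl fun j _ => hσ.length_succ_sub_length_castSucc j, sum_sub_distrib,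
    sum_boole, sum_boole, filter_mem_eq_inter, filter_mem_eq_inter, univ_inter, univ_inter]

theorem succ_eq_mul_simple (hσ : cs.IsSubexpr ω σ) {j : Fin n}
    (hj : j ∈ cs.upSteps σ ∪ cs.downSteps σ) : σ j.succ = σ j.castSucc * cs.simple (ω j) := by
  rw [mem_union, mem_upSteps, mem_downSteps] at hj
  exact (hσ j).resolve_left (hj.elim And.left And.left)

/-- Up- and down-steps balance, and they cannot cover all `n` steps, since then
`σ (last n) = σ 0 * π ω`. -/
theorem two_mul_card_upSteps_lt (hσ : cs.IsSubexpr ω σ) (hclosed : σ (Fin.last n) = σ 0)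
    (hω : cs.wordProd (List.ofFn ω) ≠ 1) : 2 * (cs.upSteps σ).card < n := by
  have hbalance := hσ.card_upSteps_sub_card_downSteps
  rw [hclosed, sub_self, sub_eq_zero, Nat.cast_inj] at hbalance
  have hunion := card_union_of_disjoint (cs.disjoint_upSteps_downSteps σ)
  have hproper : cs.upSteps σ ∪ cs.downSteps σ ≠ univ := fun huniv => hω <| by
    have hlast := cs.last_eq_mul_wordProd_ofFn fun j => hσ.succ_eq_mul_simple (huniv ▸ mem_univ j)
    rwa [hclosed, left_eq_mul] at hlast
  have hlt := card_lt_card (ssubset_univ_iff.mpr hproper)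
  rw [card_univ, Fintype.card_fin] at hlt
  omega

end IsSubexpr

theorem G₂_wordProd_g2Word_ne_one (cs : CoxeterSystem CoxeterMatrix.G₂ W) :
    cs.wordProd (List.ofFn g2Word) ≠ 1 := by
  have hliftable : CoxeterMatrix.IsLiftable CoxeterMatrix.G₂
      (![DihedralGroup.sr 0, DihedralGroup.sr 1] : Fin 2 → DihedralGroup 6) := by
    unfold CoxeterMatrix.IsLiftable
    decide
  intro h
  have hdihedral := congrArg (cs.lift ⟨_, hliftable⟩) h
  simp only [wordProd, g2Word, List.ofFn_succ, List.ofFn_zero, List.map_cons, List.map_nil,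
    List.prod_cons, List.prod_nil, map_mul, map_one, lift_apply_simple] at hdihedral
  revert hdihedral
  decide

end CoxeterSystem

open scoped Classical in
/-- In the Coxeter system of type `G₂`, every distinguished subexpression `σ` for `1` of the
reduced word `(1,2,1,2,1,2)` satisfies `|J(σ)| ≤ 2`, where `J(σ)` is the set of steps at which
the length goes up. -/
theorem stmt_6 {W : Type*} [Group W] (cs : CoxeterSystem CoxeterMatrix.G₂ W)
    (σ : Fin 7 → W) (hσ : IsDistSubexprOne cs σ) :
    (Finset.univ.filter (fun j : Fin 6 =>
        σ j.succ ≠ σ j.castSucc ∧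
        cs.length (σ j.castSucc) < cs.length (σ j.succ))).card ≤ 2 := by
  obtain ⟨hstart, hend, hsubexpr, -⟩ := hσ
  have hclosed : σ (Fin.last 6) = σ 0 := hend.trans hstart.symm
  have hbound := CoxeterSystem.IsSubexpr.two_mul_card_upSteps_lt hsubexpr hclosed
    cs.G₂_wordProd_g2Word_ne_one
  change 2 * (cs.upSteps σ).card < 6 at hbound
  change (cs.upSteps σ).card ≤ 2
  omega
end

section
/- Let a, b, c, d, e, f be negative real numbers. Set p_1 = e + c + a, p_2 = ed + eb + bc, and u = e²d³c + e²d³a + 3e²abd² + 3e²ab²d + e²ab³ + 3eab²cd + 2eab³c + ab³c². Then p_1, p_2, u, a, b c d² e, and d e f are all nonzero, and the six quantities a′ = 1/p_1, b′ = p_1/p_2, c′ = p_2³/(u p_1), d′ = u/(b c d² e p_2), e′ = e²d³c/(a u), f′ = ab/(def) are all negative. (This identifies the connected component B, consisting of the all-negative cell D⁺_{ĩ}(−,−,−,−,−,−), with the component 2 of the intersection of opposed big cells under the map ε.) -/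
/-! Writing each negative variable as `-x` with `x > 0`, the polynomials `p₂` and `u` are
homogeneous of even degree (2 and 6) with positive coefficients, hence positive, while `p₁` is
negative. Every output is then a quotient whose sign is read off from these three signs and from
the parity of the degrees of the monomials in numerator and denominator. -/

lemma exists_pos_eq_neg {x : ℝ} (hx : x < 0) : ∃ y, 0 < y ∧ x = -y :=
  ⟨-x, neg_pos.2 hx, (neg_neg x).symm⟩

section G2ChamberAnsatz

variable {a b c d e : ℝ}

lemma g2_chamber_p₂_pos (hb : b < 0) (hc : c < 0) (hd : d < 0) (he : e < 0) :
    0 < e * d + e * b + b * c := by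
  obtain ⟨b, hb, rfl⟩ := exists_pos_eq_neg hb
  obtain ⟨c, hc, rfl⟩ := exists_pos_eq_neg hc
  obtain ⟨d, hd, rfl⟩ := exists_pos_eq_neg hd
  obtain ⟨e, he, rfl⟩ := exists_pos_eq_neg he
  ring_nf
  positivity

lemma g2_chamber_u_pos (ha : a < 0) (hb : b < 0) (hc : c < 0) (hd : d < 0) (he : e < 0) :
    0 < e ^ 2 * d ^ 3 * c + e ^ 2 * d ^ 3 * a + 3 * e ^ 2 * a * b * d ^ 2 +
        3 * e ^ 2 * a * b ^ 2 * d + e ^ 2 * a * b ^ 3 + 3 * e * a * b ^ 2 * c * d +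
        2 * e * a * b ^ 3 * c + a * b ^ 3 * c ^ 2 := by
  obtain ⟨a, ha, rfl⟩ := exists_pos_eq_neg ha
  obtain ⟨b, hb, rfl⟩ := exists_pos_eq_neg hb
  obtain ⟨c, hc, rfl⟩ := exists_pos_eq_neg hc
  obtain ⟨d, hd, rfl⟩ := exists_pos_eq_neg hd
  obtain ⟨e, he, rfl⟩ := exists_pos_eq_neg he
  ring_nf
  positivity

lemma g2_chamber_e'_num_pos (hc : c < 0) (hd : d < 0) (he : e < 0) : 0 < e ^ 2 * d ^ 3 * c := by
  obtain ⟨c, hc, rfl⟩ := exists_pos_eq_neg hc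
  obtain ⟨d, hd, rfl⟩ := exists_pos_eq_neg hd
  obtain ⟨e, he, rfl⟩ := exists_pos_eq_neg he
  ring_nf
  positivity

end G2ChamberAnsatz

/-- Chamber-ansatz sign computation for type G₂: if a, b, c, d, e, f are all negative, then the
denominators p₁, p₂, u, a, bcd²e, def are nonzero and the six chamber-ansatz outputs
a′, b′, c′, d′, e′, f′ are all negative (component B maps to component 2). -/
theorem stmt_9 (a b c d e f p₁ p₂ u : ℝ)
    (ha : a < 0) (hb : b < 0) (hc : c < 0) (hd : d < 0) (he : e < 0) (hf : f < 0)
    (hp₁ : p₁ = e + c + a) (hp₂ : p₂ = e * d + e * b + b * c)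
    (hu : u = e ^ 2 * d ^ 3 * c + e ^ 2 * d ^ 3 * a + 3 * e ^ 2 * a * b * d ^ 2 +
        3 * e ^ 2 * a * b ^ 2 * d + e ^ 2 * a * b ^ 3 + 3 * e * a * b ^ 2 * c * d +
        2 * e * a * b ^ 3 * c + a * b ^ 3 * c ^ 2) :
    p₁ ≠ 0 ∧ p₂ ≠ 0 ∧ u ≠ 0 ∧ a ≠ 0 ∧ b * c * d ^ 2 * e ≠ 0 ∧ d * e * f ≠ 0 ∧
    1 / p₁ < 0 ∧ p₁ / p₂ < 0 ∧ p₂ ^ 3 / (u * p₁) < 0 ∧ u / (b * c * d ^ 2 * e * p₂) < 0 ∧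
    e ^ 2 * d ^ 3 * c / (a * u) < 0 ∧ a * b / (d * e * f) < 0 := by
  have h₁ : p₁ < 0 := by rw [hp₁]; linarith
  have h₂ : 0 < p₂ := hp₂ ▸ g2_chamber_p₂_pos hb hc hd he
  have hu₀ : 0 < u := hu ▸ g2_chamber_u_pos ha hb hc hd he
  have hbcde : b * c * d ^ 2 * e < 0 :=
    mul_neg_of_pos_of_neg (mul_pos (mul_pos_of_neg_of_neg hb hc) (sq_pos_of_neg hd)) he
  have hdef : d * e * f < 0 := mul_neg_of_pos_of_neg (mul_pos_of_neg_of_neg hd he) hf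
  refine ⟨h₁.ne, h₂.ne', hu₀.ne', ha.ne, hbcde.ne, hdef.ne, ?_, ?_, ?_, ?_, ?_, ?_⟩
  · exact div_neg_of_pos_of_neg one_pos h₁
  · exact div_neg_of_neg_of_pos h₁ h₂
  · exact div_neg_of_pos_of_neg (by positivity) (mul_neg_of_pos_of_neg hu₀ h₁)
  · exact div_neg_of_pos_of_neg hu₀ (mul_neg_of_neg_of_pos hbcde h₂)
  · exact div_neg_of_pos_of_neg (g2_chamber_e'_num_pos hc hd he) (mul_neg_of_neg_of_pos ha hu₀)
  · exact div_neg_of_pos_of_neg (mul_pos_of_neg_of_neg ha hb) hdef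
end

section
/- Let a, b, c, d, e, f be real numbers with a < 0, b > 0, c < 0, d > 0, e < 0, f > 0. Set p_1 = e + c + a, p_2 = ed + eb + bc, and u = e²d³c + e²d³a + 3e²abd² + 3e²ab²d + e²ab³ + 3eab²cd + 2eab³c + ab³c². Then p_1, p_2, u, a, b c d² e, and d e f are all nonzero, and the quantities a′ = 1/p_1, b′ = p_1/p_2, c′ = p_2³/(u p_1), d′ = u/(b c d² e p_2), e′ = e²d³c/(a u), f′ = ab/(def) satisfy a′ < 0, b′ > 0, c′ < 0, d′ > 0, e′ < 0, f′ > 0. (This identifies the connected component C, consisting of the alternating-sign cell D⁺_{ĩ}(−,+,−,+,−,+), with the component 3 of the intersection of opposed big cells under the map ε.) -/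
/-! With the sign pattern `(−,+,−,+,−,+)` every monomial of `p₁`, `p₂` and `u` is negative: after
writing `a = -A`, `c = -C`, `e = -E` with `A, C, E > 0`, the negatives of these polynomials have only
positive coefficients. The signs of the six chamber-ansatz outputs are then read off quotient by
quotient. -/

namespace ChamberAnsatzG2

variable {a b c d e : ℝ}

theorem p₂_neg (hb : 0 < b) (hc : c < 0) (hd : 0 < d) (he : e < 0) :
    e * d + e * b + b * c < 0 := by
  obtain ⟨C, hC, rfl⟩ : ∃ C > 0, c = -C := ⟨-c, neg_pos.2 hc, (neg_neg c).symm⟩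
  obtain ⟨E, hE, rfl⟩ : ∃ E > 0, e = -E := ⟨-e, neg_pos.2 he, (neg_neg e).symm⟩
  have : 0 < E * d + E * b + b * C := by positivity
  linear_combination this

theorem u_neg (ha : a < 0) (hb : 0 < b) (hc : c < 0) (hd : 0 < d) (he : e < 0) :
    e ^ 2 * d ^ 3 * c + e ^ 2 * d ^ 3 * a + 3 * e ^ 2 * a * b * d ^ 2 +
      3 * e ^ 2 * a * b ^ 2 * d + e ^ 2 * a * b ^ 3 + 3 * e * a * b ^ 2 * c * d +
      2 * e * a * b ^ 3 * c + a * b ^ 3 * c ^ 2 < 0 := by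
  obtain ⟨A, hA, rfl⟩ : ∃ A > 0, a = -A := ⟨-a, neg_pos.2 ha, (neg_neg a).symm⟩
  obtain ⟨C, hC, rfl⟩ : ∃ C > 0, c = -C := ⟨-c, neg_pos.2 hc, (neg_neg c).symm⟩
  obtain ⟨E, hE, rfl⟩ : ∃ E > 0, e = -E := ⟨-e, neg_pos.2 he, (neg_neg e).symm⟩
  have : 0 < E ^ 2 * d ^ 3 * C + E ^ 2 * d ^ 3 * A + 3 * E ^ 2 * A * b * d ^ 2 +
      3 * E ^ 2 * A * b ^ 2 * d + E ^ 2 * A * b ^ 3 + 3 * E * A * b ^ 2 * C * d +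
      2 * E * A * b ^ 3 * C + A * b ^ 3 * C ^ 2 := by positivity
  linear_combination this

end ChamberAnsatzG2

open ChamberAnsatzG2 in
/-- Chamber-ansatz sign computation for type G₂: if the signs of a, b, c, d, e, f alternate as
(−,+,−,+,−,+), then the denominators p₁, p₂, u, a, bcd²e, def are nonzero and the six
chamber-ansatz outputs have signs (−,+,−,+,−,+) (component C maps to component 3). -/
theorem stmt_10 (a b c d e f p₁ p₂ u : ℝ)
    (ha : a < 0) (hb : 0 < b) (hc : c < 0) (hd : 0 < d) (he : e < 0) (hf : 0 < f)
    (hp₁ : p₁ = e + c + a) (hp₂ : p₂ = e * d + e * b + b * c)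
    (hu : u = e ^ 2 * d ^ 3 * c + e ^ 2 * d ^ 3 * a + 3 * e ^ 2 * a * b * d ^ 2 +
        3 * e ^ 2 * a * b ^ 2 * d + e ^ 2 * a * b ^ 3 + 3 * e * a * b ^ 2 * c * d +
        2 * e * a * b ^ 3 * c + a * b ^ 3 * c ^ 2) :
    p₁ ≠ 0 ∧ p₂ ≠ 0 ∧ u ≠ 0 ∧ a ≠ 0 ∧ b * c * d ^ 2 * e ≠ 0 ∧ d * e * f ≠ 0 ∧
    1 / p₁ < 0 ∧ 0 < p₁ / p₂ ∧ p₂ ^ 3 / (u * p₁) < 0 ∧ 0 < u / (b * c * d ^ 2 * e * p₂) ∧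
    e ^ 2 * d ^ 3 * c / (a * u) < 0 ∧ 0 < a * b / (d * e * f) := by
  have h₁ : p₁ < 0 := by rw [hp₁]; linarith
  have h₂ : p₂ < 0 := hp₂ ▸ p₂_neg hb hc hd he
  have hu₀ : u < 0 := hu ▸ u_neg ha hb hc hd he
  have hbcde : 0 < b * c * d ^ 2 * e := by
    have : 0 < b * d ^ 2 * (c * e) :=
      mul_pos (mul_pos hb (pow_pos hd 2)) (mul_pos_of_neg_of_neg hc he)
    linear_combination this
  have hdef : d * e * f < 0 := mul_neg_of_neg_of_pos (mul_neg_of_pos_of_neg hd he) hf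
  have hedc : e ^ 2 * d ^ 3 * c < 0 :=
    mul_neg_of_pos_of_neg (mul_pos (sq_pos_of_neg he) (pow_pos hd 3)) hc
  refine ⟨h₁.ne, h₂.ne, hu₀.ne, ha.ne, hbcde.ne', hdef.ne, div_neg_of_pos_of_neg one_pos h₁,
    div_pos_of_neg_of_neg h₁ h₂, ?_, ?_, ?_, ?_⟩
  · exact div_neg_of_neg_of_pos (Odd.pow_neg (by decide) h₂) (mul_pos_of_neg_of_neg hu₀ h₁)
  · exact div_pos_of_neg_of_neg hu₀ (mul_neg_of_pos_of_neg hbcde h₂)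
  · exact div_neg_of_neg_of_pos hedc (mul_pos_of_neg_of_neg ha hu₀)
  · exact div_pos_of_neg_of_neg (mul_neg_of_neg_of_pos ha hb) hdef
end

section
/- Let a, b, c, d, e, f be real numbers with a > 0, b < 0, c > 0, d < 0, e > 0, f < 0. Set p_1 = e + c + a, p_2 = ed + eb + bc, and u = e²d³c + e²d³a + 3e²abd² + 3e²ab²d + e²ab³ + 3eab²cd + 2eab³c + ab³c². Then p_1, p_2, u, a, b c d² e, and d e f are all nonzero, and the quantities a′ = 1/p_1, b′ = p_1/p_2, c′ = p_2³/(u p_1), d′ = u/(b c d² e p_2), e′ = e²d³c/(a u), f′ = ab/(def) satisfy a′ > 0, b′ < 0, c′ > 0, d′ < 0, e′ > 0, f′ < 0. (This identifies the connected component D, consisting of the alternating-sign cell D⁺_{ĩ}(+,−,+,−,+,−), with the component 4 of the intersection of opposed big cells under the map ε.) -/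
/-!
Writing b = -β and d = -δ with β, δ > 0, every monomial of p₂ and of u has odd total degree
in β and δ, so p₂ < 0 and u < 0; each remaining sign is then a product of known signs.
-/

namespace G2ChamberAnsatz

lemma p₂_neg {b c d e : ℝ} (hb : b < 0) (hc : 0 < c) (hd : d < 0) (he : 0 < e) :
    e * d + e * b + b * c < 0 := by
  linarith [mul_neg_of_pos_of_neg he hd, mul_neg_of_pos_of_neg he hb,
    mul_neg_of_neg_of_pos hb hc]

lemma u_neg {a b c d e : ℝ} (ha : 0 < a) (hb : b < 0) (hc : 0 < c) (hd : d < 0)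
    (he : 0 < e) :
    e ^ 2 * d ^ 3 * c + e ^ 2 * d ^ 3 * a + 3 * e ^ 2 * a * b * d ^ 2 +
      3 * e ^ 2 * a * b ^ 2 * d + e ^ 2 * a * b ^ 3 + 3 * e * a * b ^ 2 * c * d +
      2 * e * a * b ^ 3 * c + a * b ^ 3 * c ^ 2 < 0 := by
  obtain ⟨β, hβ, rfl⟩ : ∃ β : ℝ, 0 < β ∧ b = -β := ⟨-b, by linarith, by ring⟩
  obtain ⟨δ, hδ, rfl⟩ : ∃ δ : ℝ, 0 < δ ∧ d = -δ := ⟨-d, by linarith, by ring⟩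
  have hpos : 0 < e ^ 2 * δ ^ 3 * c + e ^ 2 * δ ^ 3 * a + 3 * e ^ 2 * a * β * δ ^ 2 +
      3 * e ^ 2 * a * β ^ 2 * δ + e ^ 2 * a * β ^ 3 + 3 * e * a * β ^ 2 * c * δ +
      2 * e * a * β ^ 3 * c + a * β ^ 3 * c ^ 2 := by positivity
  linarith

end G2ChamberAnsatz

/-- Chamber-ansatz sign computation for type G₂: if the signs of a, b, c, d, e, f alternate as
(+,−,+,−,+,−), then the denominators p₁, p₂, u, a, bcd²e, def are nonzero and the six
chamber-ansatz outputs have signs (+,−,+,−,+,−) (component D maps to component 4). -/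
theorem stmt_11 (a b c d e f p₁ p₂ u : ℝ)
    (ha : 0 < a) (hb : b < 0) (hc : 0 < c) (hd : d < 0) (he : 0 < e) (hf : f < 0)
    (hp₁ : p₁ = e + c + a) (hp₂ : p₂ = e * d + e * b + b * c)
    (hu : u = e ^ 2 * d ^ 3 * c + e ^ 2 * d ^ 3 * a + 3 * e ^ 2 * a * b * d ^ 2 +
        3 * e ^ 2 * a * b ^ 2 * d + e ^ 2 * a * b ^ 3 + 3 * e * a * b ^ 2 * c * d +
        2 * e * a * b ^ 3 * c + a * b ^ 3 * c ^ 2) :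
    p₁ ≠ 0 ∧ p₂ ≠ 0 ∧ u ≠ 0 ∧ a ≠ 0 ∧ b * c * d ^ 2 * e ≠ 0 ∧ d * e * f ≠ 0 ∧
    0 < 1 / p₁ ∧ p₁ / p₂ < 0 ∧ 0 < p₂ ^ 3 / (u * p₁) ∧ u / (b * c * d ^ 2 * e * p₂) < 0 ∧
    0 < e ^ 2 * d ^ 3 * c / (a * u) ∧ a * b / (d * e * f) < 0 := by
  have h₁ : 0 < p₁ := hp₁ ▸ by positivity
  have h₂ : p₂ < 0 := hp₂ ▸ G2ChamberAnsatz.p₂_neg hb hc hd he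
  have hu' : u < 0 := hu ▸ G2ChamberAnsatz.u_neg ha hb hc hd he
  have hd₃ : d ^ 3 < 0 := Odd.pow_neg (by decide) hd
  have hbcde : b * c * d ^ 2 * e < 0 :=
    mul_neg_of_neg_of_pos (mul_neg_of_neg_of_pos (mul_neg_of_neg_of_pos hb hc)
      (Even.pow_pos (by decide) hd.ne)) he
  have hdef : 0 < d * e * f := mul_pos_of_neg_of_neg (mul_neg_of_neg_of_pos hd he) hf
  have hedc : e ^ 2 * d ^ 3 * c < 0 :=
    mul_neg_of_neg_of_pos (mul_neg_of_pos_of_neg (by positivity) hd₃) hc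
  refine ⟨h₁.ne', h₂.ne, hu'.ne, ha.ne', hbcde.ne, hdef.ne', one_div_pos.2 h₁,
    div_neg_of_pos_of_neg h₁ h₂, ?_, ?_, ?_, ?_⟩
  · exact div_pos_of_neg_of_neg (Odd.pow_neg (by decide) h₂) (mul_neg_of_neg_of_pos hu' h₁)
  · exact div_neg_of_neg_of_pos hu' (mul_pos_of_neg_of_neg hbcde h₂)
  · exact div_pos_of_neg_of_neg hedc (mul_neg_of_pos_of_neg ha hu')
  · exact div_neg_of_neg_of_pos (mul_neg_of_pos_of_neg ha hb) hdef
end
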